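/- arXiv:2503.20487 — 4 statements merged into one kernel-verified Lean document; each statement's English description precedes it below -/
import Mathlib

section
/- Let ξ, ξ_1, ξ_2, … be i.i.d. ℕ-valued random variables, ξ̄_n = max_{1≤i≤n} ξ_i, and let a_n = max{k ≥ 0 : P(ξ ≥ k) ≥ 1/n}. If ∑_{n≥1} P(ξ ≥ a_n + l) < ∞ for a fixed integer l, then P(ξ̄_n ≥ a_n + l infinitely often) = 0. -/
/-!
By the first Borel–Cantelli lemma, almost surely `ξ n ≥ a n + l` holds for only finitely many `n`,
and, for each fixed `i`, `ξ i ≥ a n + l` holds for only finitely many `n`. Take `N` beyond the last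
`n` with `ξ n ≥ a n + l`. If `ξ̄ n ≥ a n + l`, the maximum is attained at some `k < n`; `k ≥ N` is
impossible since `a k ≤ a n` by monotonicity of `a`, so for infinitely many `n` one of the finitely
many `ξ i`, `i < N`, exceeds `a n + l`, which is again a null event.
-/

open MeasureTheory ProbabilityTheory Filter Finset

lemma monotoneOn_of_isGreatest_one_div_le {p : ℕ → ℝ} {a : ℕ → ℕ}
    (ha : ∀ n : ℕ, 1 ≤ n → IsGreatest {k : ℕ | 1 / (n : ℝ) ≤ p k} (a n)) :
    MonotoneOn a (Set.Ici 1) := by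
  intro n (hn : 1 ≤ n) m (hm : 1 ≤ m) hnm
  have hinv : 1 / (m : ℝ) ≤ 1 / (n : ℝ) :=
    one_div_le_one_div_of_le (by exact_mod_cast hn) (by exact_mod_cast hnm)
  exact (ha m hm).2 (hinv.trans (ha n hn).1)

lemma frequently_le_self_or_frequently_le_of_frequently_le_sup {x : ℕ → ℕ} {c : ℕ → ℤ}
    (hc : MonotoneOn c (Set.Ici 1))
    (h : ∃ᶠ n in atTop, c n ≤ ((range n).sup x : ℕ)) :
    (∃ᶠ n in atTop, c n ≤ x n) ∨ ∃ i, ∃ᶠ n in atTop, c n ≤ x i := by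
  by_contra! hneg
  obtain ⟨hlate, hearly⟩ := hneg
  obtain ⟨N, hN⟩ := eventually_atTop.1 hlate
  have hearly_all : ∀ᶠ n in atTop, ∀ i ∈ range (N + 1), (x i : ℤ) < c n :=
    (eventually_all_finset _).2 fun i _ => hearly i
  refine h (((eventually_ge_atTop (N + 1)).and hearly_all).mono fun n ⟨hNn, hlt⟩ => ?_)
  obtain ⟨k, hk, hkmax⟩ := exists_mem_eq_sup (range n) (nonempty_range_iff.2 (by omega)) x
  show ¬c n ≤ ((range n).sup x : ℕ)
  rw [hkmax, not_le]
  rcases le_or_gt k N with hkN | hNk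
  · exact hlt k (mem_range.2 (by omega))
  · exact (hN k hNk.le).trans_le
      (hc (Set.mem_Ici.2 (by omega)) (Set.mem_Ici.2 (by omega)) (mem_range.1 hk).le)

lemma measure_limsup_preimage_eq_zero_of_identDistrib {Ω α : Type*} [MeasurableSpace Ω]
    [MeasurableSpace α] {μ : Measure Ω} {X : ℕ → Ω → α}
    (hX : ∀ i, IdentDistrib (X i) (X 0) μ μ) {s : ℕ → Set α} (hs : ∀ n, MeasurableSet (s n))
    (hsum : ∑' n, μ (X 0 ⁻¹' s n) ≠ ⊤) (j : ℕ → ℕ) :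
    μ (limsup (fun n => X (j n) ⁻¹' s n) atTop) = 0 := by
  refine measure_limsup_atTop_eq_zero ?_
  simpa only [(hX (j _)).measure_mem_eq (hs _)] using hsum

theorem max_ge_a_add_l_io_zero_general {Ω : Type*} [MeasureSpace Ω] (ξ : ℕ → Ω → ℕ)
    (hident : ∀ i, IdentDistrib (ξ i) (ξ 0) ℙ ℙ)
    (a : ℕ → ℕ)
    (ha : ∀ n : ℕ, 1 ≤ n →
      IsGreatest {k : ℕ | 1 / (n : ℝ) ≤ (ℙ {ω | k ≤ ξ 0 ω}).toReal} (a n))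
    (l : ℤ)
    (hsum : ∑' n : ℕ, ℙ {ω | (a n : ℤ) + l ≤ (ξ 0 ω : ℤ)} ≠ ⊤) :
    ℙ (limsup (fun n => {ω | (a n : ℤ) + l ≤ ((Finset.range n).sup fun i => ξ i ω : ℕ)})
        atTop) = 0 := by
  have hc : MonotoneOn (fun n => (a n : ℤ) + l) (Set.Ici 1) := fun n hn m hm hnm => by
    simpa only [add_le_add_iff_right, Nat.cast_le] using
      monotoneOn_of_isGreatest_one_div_le ha hn hm hnm
  have hs : ∀ n, MeasurableSet {x : ℕ | (a n : ℤ) + l ≤ x} := fun _ => .of_discrete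
  have hdiag := measure_limsup_preimage_eq_zero_of_identDistrib hident hs hsum id
  have hfixed := fun i =>
    measure_limsup_preimage_eq_zero_of_identDistrib hident hs hsum fun _ => i
  refine measure_mono_null (fun ω hω => ?_) (measure_union_null hdiag (measure_iUnion_null hfixed))
  simp only [Set.mem_union, Set.mem_iUnion, mem_limsup_iff_frequently_mem] at hω ⊢
  exact frequently_le_self_or_frequently_le_of_frequently_le_sup hc hω

/-- If `∑ₙ P(ξ ≥ aₙ + l) < ∞` then `P(ξ̄ₙ ≥ aₙ + l  i.o.) = 0`. -/
theorem max_ge_a_add_l_io_zero {Ω : Type*} [MeasureSpace Ω]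
    [IsProbabilityMeasure (ℙ : Measure Ω)] (ξ : ℕ → Ω → ℕ)
    (hmeas : ∀ i, Measurable (ξ i))
    (hindep : iIndepFun ξ ℙ)
    (hident : ∀ i, IdentDistrib (ξ i) (ξ 0) ℙ ℙ)
    (hpos : ∀ k : ℕ, 0 < ℙ {ω | ξ 0 ω = k})
    (a : ℕ → ℕ)
    (ha : ∀ n : ℕ, 1 ≤ n →
      IsGreatest {k : ℕ | 1 / (n : ℝ) ≤ (ℙ {ω | k ≤ ξ 0 ω}).toReal} (a n))
    (l : ℤ)
    (hsum : ∑' n : ℕ, ℙ {ω | (a n : ℤ) + l ≤ (ξ 0 ω : ℤ)} ≠ ⊤) :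
    ℙ (limsup (fun n => {ω | (a n : ℤ) + l ≤ ((Finset.range n).sup fun i => ξ i ω : ℕ)})
        atTop) = 0 :=
  max_ge_a_add_l_io_zero_general ξ hident a ha l hsum
end

section
/- Let ξ, ξ_1, ξ_2, … be i.i.d. ℕ-valued random variables with all point masses positive, ξ̄_n = max_{1≤i≤n} ξ_i, R(n) = -ln P(ξ ≥ n), r(n) = R(n) - R(n-1), a_n = max{k : P(ξ ≥ k) ≥ 1/n}. If r is monotone with r(n) → ∞, then for l ∈ {0, 1}, P(ξ̄_n = a_n + l infinitely often) = 1. -/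
/-!
Since `r → ∞`, the tail `p k = P(ξ ≥ k)` eventually drops by a factor of at least `64` at
each step. For every large `A`, choose `n` so that `n p(A + l)` lies in `[1/2, 2)` (more
precisely `1 ≤ n p(A)` and `n p(A + 1) < 1`, so that `aₙ = A`). The maximum satisfies
`P(ξ̄ₙ = c) = (1 - p(c + 1))ⁿ - (1 - p(c))ⁿ`, and with `n p(A + l) ≥ 1/2`,
`n p(A + l + 1) ≤ 1/8` this is at least `1/5`. Hence `P(ξ̄ₙ = aₙ + l) ≥ 1/5` for infinitely
many `n`, so the `limsup` event has probability at least `1/5`. As `aₙ → ∞`, whether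
`ξ̄ₙ = aₙ + l` holds for large `n` does not depend on finitely many of the `ξᵢ`: the event is a
tail event, and Kolmogorov's 0-1 law upgrades `≥ 1/5` to `= 1`.
-/

open MeasureTheory ProbabilityTheory Filter Finset

theorem one_sub_pow_mul_one_add_mul_le_one {p : ℝ} (hp0 : 0 ≤ p) (hp1 : p ≤ 1) (n : ℕ) :
    (1 - p) ^ n * (1 + n * p) ≤ 1 := by
  have hsq : (1 - p) ^ n * (1 + p) ^ n ≤ 1 := by
    rw [← mul_pow]
    exact pow_le_one₀ (by nlinarith) (by nlinarith)
  nlinarith [one_add_mul_le_pow (show (-2 : ℝ) ≤ p by linarith) n,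
    pow_nonneg (show 0 ≤ 1 - p by linarith) n]

theorem one_fifth_le_one_sub_pow_sub_one_sub_pow {p q : ℝ} {n : ℕ} (hq : 0 ≤ q) (hqp : q ≤ p)
    (hp : p ≤ 1) (hnp : 1 / 2 ≤ n * p) (hnq : n * q ≤ 1 / 8) :
    1 / 5 ≤ (1 - q) ^ n - (1 - p) ^ n := by
  -- Bernoulli gives `(1 - q)ⁿ ≥ 7/8`, and `(1 - p)ⁿ ≤ 1 / (1 + n p) ≤ 2/3`.
  have hq_pow : 1 - n * q ≤ (1 - q) ^ n := by
    simpa [sub_eq_add_neg] using one_add_mul_le_pow (show (-2 : ℝ) ≤ -q by linarith) n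
  nlinarith [one_sub_pow_mul_one_add_mul_le_one (hq.trans hqp) hp n,
    pow_nonneg (show 0 ≤ 1 - p by linarith) n]

theorem exists_nat_half_le_lt {x : ℝ} (hx : 2 ≤ x) : ∃ n : ℕ, x / 2 ≤ n ∧ (n : ℝ) < x := by
  refine ⟨⌈x⌉₊ - 1, ?_, ?_⟩ <;>
  · rw [Nat.cast_sub (Nat.one_le_iff_ne_zero.2 (by positivity)), Nat.cast_one]
    linarith [Nat.le_ceil x, Nat.ceil_lt_add_one (show 0 ≤ x by linarith)]

/-- With `l = 0` take `n p(A) ∈ [1, 2)`, with `l = 1` take `n p(A + 1) ∈ [1/2, 1)`. -/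
theorem exists_nat_window {p : ℕ → ℝ} (hpos : ∀ k, 0 < p k) (hle : ∀ k, p k ≤ 1) {A : ℕ}
    (hA : 64 * p (A + 1) ≤ p A) (hA' : 64 * p (A + 2) ≤ p (A + 1)) {l : ℕ} (hl : l ≤ 1) :
    ∃ n : ℕ, 1 ≤ n * p A ∧ n * p (A + 1) < 1 ∧ 1 / 2 ≤ n * p (A + l) ∧
      n * p (A + l + 1) ≤ 1 / 8 := by
  have h0 := hpos A
  have h1 := hpos (A + 1)
  interval_cases l
  · obtain ⟨n, hlo, hhi⟩ := exists_nat_half_le_lt (x := 2 / p A)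
      (by rw [le_div_iff₀ h0]; linarith [hle A])
    rw [div_div, div_le_iff₀ (by positivity)] at hlo
    rw [lt_div_iff₀ h0] at hhi
    refine ⟨n, by linarith, by nlinarith, by simp; linarith, by nlinarith⟩
  · obtain ⟨n, hlo, hhi⟩ := exists_nat_half_le_lt (x := 1 / p (A + 1))
      (by rw [le_div_iff₀ h1]; linarith [hle A])
    rw [div_div, div_le_iff₀ (by positivity)] at hlo
    rw [lt_div_iff₀ h1] at hhi
    refine ⟨n, by nlinarith, by linarith, by linarith, by nlinarith⟩

theorem eventually_mul_le_of_tendsto_log_sub {p : ℕ → ℝ} (hp : ∀ k, 0 < p k)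
    (h : Tendsto (fun k => Real.log (p k) - Real.log (p (k + 1))) atTop atTop) {C : ℝ}
    (hC : 0 < C) : ∀ᶠ k in atTop, C * p (k + 1) ≤ p k := by
  filter_upwards [h.eventually_ge_atTop (Real.log C)] with k hk
  rw [← Real.log_le_log_iff (mul_pos hC (hp _)) (hp k), Real.log_mul hC.ne' (hp _).ne']
  linarith

theorem IsGreatest.eq_of_antitone {α : Type*} [LinearOrder α] {f : ℕ → α} (hf : Antitone f)
    {t : α} {a c : ℕ} (ha : IsGreatest {k | t ≤ f k} a) (hc : t ≤ f c) (hc' : f (c + 1) < t) :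
    a = c :=
  ha.unique ⟨hc, fun _ hk => not_lt.1 fun hck => (hf hck).not_gt (hc'.trans_le hk)⟩

theorem tendsto_atTop_of_isGreatest {p : ℕ → ℝ} (hp : ∀ k, 0 < p k) {a : ℕ → ℕ}
    (ha : ∀ n : ℕ, 1 ≤ n → IsGreatest {k | 1 / (n : ℝ) ≤ p k} (a n)) :
    Tendsto a atTop atTop := by
  refine tendsto_atTop.2 fun b => ?_
  obtain ⟨N, hN⟩ := exists_nat_gt (1 / p b)
  filter_upwards [eventually_ge_atTop (N + 1)] with n hn
  have hn' : (N : ℝ) < n := by exact_mod_cast hn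
  refine (ha n (by omega)).2 ?_
  rw [Set.mem_ofPred_eq, div_le_iff₀ (by linarith [one_div_pos.2 (hp b)])]
  rw [div_lt_iff₀ (hp b)] at hN
  nlinarith [hp b]

theorem Finset.measurable_sup_apply {ι δ α : Type*} {mδ : MeasurableSpace δ} [MeasurableSpace α]
    [SemilatticeSup α] [OrderBot α] [MeasurableSup₂ α] {s : Finset ι} {f : ι → δ → α}
    (hf : ∀ i ∈ s, Measurable (f i)) : Measurable fun x => s.sup fun i => f i x := by
  rw [show (fun x => s.sup fun i => f i x) = s.sup f from funext fun x => (s.sup_apply f x).symm]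
  exact Finset.sup_induction (p := Measurable) measurable_const (fun _ h₁ _ h₂ => h₁.sup h₂) hf

theorem le_measureReal_limsup_of_frequently_le {Ω : Type*} [MeasurableSpace Ω] {μ : Measure Ω}
    [IsFiniteMeasure μ] {s : ℕ → Set Ω} (hs : ∀ n, MeasurableSet (s n)) {ε : ℝ}
    (h : ∃ᶠ n in atTop, ε ≤ μ.real (s n)) : ε ≤ μ.real (limsup s atTop) := by
  simp only [limsup_eq_iInf_iSup_of_nat, Set.iInf_eq_iInter, Set.iSup_eq_iUnion]
  have htail : Tendsto (fun m => μ.real (⋃ i ≥ m, s i)) atTop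
      (nhds (μ.real (⋂ m, ⋃ i ≥ m, s i))) :=
    (ENNReal.tendsto_toReal (measure_ne_top _ _)).comp <| tendsto_measure_iInter_atTop
      (fun m => (MeasurableSet.biUnion (Set.to_countable _) fun i _ => hs i).nullMeasurableSet)
      (fun _ _ hjk => Set.biUnion_mono (fun _ hi => le_trans hjk hi) fun _ _ => le_rfl)
      ⟨0, measure_ne_top _ _⟩
  refine ge_of_tendsto htail (Eventually.of_forall fun m => ?_)
  obtain ⟨n, hmn, hn⟩ := frequently_atTop.1 h m
  exact hn.trans (measureReal_mono (Set.subset_biUnion_of_mem (u := s) hmn) (measure_ne_top _ _))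

theorem limsup_setOf_sup_range_eq_limsup_setOf_sup_Ico {Ω : Type*} {f : ℕ → Ω → ℕ}
    {c : ℕ → ℕ} (hc : Tendsto c atTop atTop) (m : ℕ) :
    limsup (fun n => {ω | (range n).sup (f · ω) = c n}) atTop =
      limsup (fun n => {ω | (Ico m n).sup (f · ω) = c n}) atTop := by
  ext ω
  simp only [mem_limsup_iff_frequently_mem, Set.mem_ofPred_eq]
  refine frequently_congr ?_
  filter_upwards [hc.eventually_gt_atTop ((range m).sup (f · ω)), eventually_ge_atTop m]
    with n hcn hmn
  rw [range_eq_Ico, ← Ico_union_Ico_eq_Ico (Nat.zero_le m) hmn, sup_union, ← range_eq_Ico]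
  omega

/-- `P(X ≥ k)`; for `X = ξ 0` this is `exp (-R k)` in the notation of the statement. -/
noncomputable def tailProb {Ω : Type*} [MeasurableSpace Ω] (μ : Measure Ω) (X : Ω → ℕ)
    (k : ℕ) : ℝ :=
  μ.real {ω | k ≤ X ω}

section TailProb

variable {Ω : Type*} [MeasurableSpace Ω] {μ : Measure Ω} [IsProbabilityMeasure μ] {X : Ω → ℕ}

theorem tailProb_antitone : Antitone (tailProb μ X) :=
  fun _ _ hkl => measureReal_mono fun _ hω => le_trans hkl hω

theorem tailProb_le_one (k : ℕ) : tailProb μ X k ≤ 1 := measureReal_le_one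

theorem tendsto_tailProb_atTop (hX : Measurable X) :
    Tendsto (tailProb μ X) atTop (nhds 0) := by
  have hempty : (⋂ k : ℕ, {ω | k ≤ X ω}) = ∅ :=
    Set.eq_empty_of_forall_notMem fun ω hω => (Set.mem_iInter.1 hω (X ω + 1)).not_gt
      (Nat.lt_succ_self _)
  have h := tendsto_measure_iInter_atTop (μ := μ) (s := fun k : ℕ => {ω | k ≤ X ω})
    (fun k => (hX measurableSet_Ici).nullMeasurableSet) (fun _ _ hjk _ hω => le_trans hjk hω)
    ⟨0, measure_ne_top _ _⟩
  rw [hempty, measure_empty] at h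
  exact (ENNReal.tendsto_toReal ENNReal.zero_ne_top).comp h

end TailProb

section IID

variable {Ω : Type*} [MeasurableSpace Ω] {μ : Measure Ω}

theorem measure_forall_mem_range_eq_pow {β : Type*} [MeasurableSpace β] {ξ : ℕ → Ω → β}
    (hindep : iIndepFun ξ μ) (hident : ∀ i, IdentDistrib (ξ i) (ξ 0) μ μ) {S : Set β}
    (hS : MeasurableSet S) (n : ℕ) :
    μ {ω | ∀ i ∈ range n, ξ i ω ∈ S} = μ (ξ 0 ⁻¹' S) ^ n := by
  have hset : {ω | ∀ i ∈ range n, ξ i ω ∈ S} = ⋂ i ∈ range n, ξ i ⁻¹' S := by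
    ext; simp
  rw [hset, hindep.measure_inter_preimage_eq_mul _ fun _ _ => hS,
    prod_congr rfl fun i _ => (hident i).measure_mem_eq hS, prod_const, card_range]

variable {ξ : ℕ → Ω → ℕ}

theorem measure_limsup_setOf_sup_range_eq_zero_or_one (hmeas : ∀ i, Measurable (ξ i))
    (hindep : iIndepFun ξ μ) {c : ℕ → ℕ} (hc : Tendsto c atTop atTop) :
    μ (limsup (fun n => {ω | (range n).sup (ξ · ω) = c n}) atTop) = 0 ∨
      μ (limsup (fun n => {ω | (range n).sup (ξ · ω) = c n}) atTop) = 1 := by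
  refine measure_zero_or_one_of_measurableSet_limsup_atTop (fun i => (hmeas i).comap_le)
    hindep.iIndep ?_
  rw [limsup_eq_iInf_iSup_of_nat, MeasurableSpace.measurableSet_iInf]
  intro m
  rw [limsup_setOf_sup_range_eq_limsup_setOf_sup_Ico hc m]
  refine @MeasurableSet.measurableSet_limsup _ (⨆ i ≥ m, MeasurableSpace.comap (ξ i) inferInstance)
    _ fun n => ?_
  refine Finset.measurable_sup_apply (fun i hi => Measurable.of_comap_le ?_)
    (measurableSet_singleton _)
  exact le_iSup₂ (f := fun i (_ : i ≥ m) => MeasurableSpace.comap (ξ i) inferInstance) i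
    (mem_Ico.1 hi).1

variable [IsProbabilityMeasure μ]

theorem measureReal_sup_range_lt_eq (hmeas : ∀ i, Measurable (ξ i)) (hindep : iIndepFun ξ μ)
    (hident : ∀ i, IdentDistrib (ξ i) (ξ 0) μ μ) {c : ℕ} (hc : 0 < c) (n : ℕ) :
    μ.real {ω | (range n).sup (ξ · ω) < c} = (1 - tailProb μ (ξ 0) c) ^ n := by
  have hset : {ω | (range n).sup (ξ · ω) < c} = {ω | ∀ i ∈ range n, ξ i ω ∈ Set.Iio c} := by
    ext; simp [Finset.sup_lt_iff (bot_lt_iff_ne_bot.2 hc.ne')]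
  have hcompl : ξ 0 ⁻¹' Set.Iio c = {ω | c ≤ ξ 0 ω}ᶜ := by
    ext; simp
  rw [measureReal_def, hset, measure_forall_mem_range_eq_pow hindep hident measurableSet_Iio,
    ENNReal.toReal_pow, ← measureReal_def, hcompl,
    probReal_compl_eq_one_sub (s := {ω | c ≤ ξ 0 ω}) (hmeas 0 measurableSet_Ici), tailProb]

theorem measureReal_sup_range_eq (hmeas : ∀ i, Measurable (ξ i)) (hindep : iIndepFun ξ μ)
    (hident : ∀ i, IdentDistrib (ξ i) (ξ 0) μ μ) {c : ℕ} (hc : 0 < c) (n : ℕ) :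
    μ.real {ω | (range n).sup (ξ · ω) = c} =
      (1 - tailProb μ (ξ 0) (c + 1)) ^ n - (1 - tailProb μ (ξ 0) c) ^ n := by
  have hset : {ω | (range n).sup (ξ · ω) = c} =
      {ω | (range n).sup (ξ · ω) < c + 1} \ {ω | (range n).sup (ξ · ω) < c} := by
    ext; simp only [Set.mem_ofPred_eq, Set.mem_sdiff]; omega
  have hsub : {ω | (range n).sup (ξ · ω) < c} ⊆ {ω | (range n).sup (ξ · ω) < c + 1} :=
    fun _ hω => Nat.lt_succ_of_lt hω
  rw [hset, measureReal_sdiff hsub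
      (measurableSet_lt (Finset.measurable_sup_apply fun i _ => hmeas i) measurable_const),
    measureReal_sup_range_lt_eq hmeas hindep hident (Nat.succ_pos c),
    measureReal_sup_range_lt_eq hmeas hindep hident hc]

theorem frequently_one_fifth_le_measureReal_sup_range_eq (hmeas : ∀ i, Measurable (ξ i))
    (hindep : iIndepFun ξ μ) (hident : ∀ i, IdentDistrib (ξ i) (ξ 0) μ μ)
    (hpos : ∀ k, 0 < tailProb μ (ξ 0) k)
    (hratio : ∀ᶠ k in atTop, 64 * tailProb μ (ξ 0) (k + 1) ≤ tailProb μ (ξ 0) k)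
    {a : ℕ → ℕ} (ha : ∀ n : ℕ, 1 ≤ n → IsGreatest {k | 1 / (n : ℝ) ≤ tailProb μ (ξ 0) k} (a n))
    {l : ℕ} (hl : l ≤ 1) :
    ∃ᶠ n in atTop, 1 / 5 ≤ μ.real {ω | (range n).sup (ξ · ω) = a n + l} := by
  set p := tailProb μ (ξ 0)
  refine frequently_atTop.2 fun m => ?_
  have hsmall : ∀ᶠ k in atTop, (m : ℝ) * p k < 1 := by
    simpa using ((tendsto_tailProb_atTop (hmeas 0)).const_mul (m : ℝ)).eventually
      (gt_mem_nhds (by simp : (m : ℝ) * 0 < 1))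
  obtain ⟨A, hA1, hAm, hA, hA'⟩ : ∃ A, 1 ≤ A ∧ m * p A < 1 ∧ 64 * p (A + 1) ≤ p A ∧
      64 * p (A + 2) ≤ p (A + 1) :=
    ((eventually_ge_atTop 1).and (hsmall.and
      (hratio.and ((tendsto_add_atTop_nat 1).eventually hratio)))).exists
  obtain ⟨n, hnA, hnA1, hlo, hhi⟩ := exists_nat_window hpos tailProb_le_one hA hA' hl
  have hn : 0 < n := Nat.pos_of_ne_zero (by rintro rfl; norm_num at hnA)
  have hn' : (0 : ℝ) < n := Nat.cast_pos.2 hn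
  have han : a n = A := (ha n hn).eq_of_antitone tailProb_antitone
    ((div_le_iff₀ hn').2 (by linarith)) ((lt_div_iff₀ hn').2 (by linarith))
  refine ⟨n, ?_, ?_⟩
  · exact_mod_cast (lt_of_mul_lt_mul_right (hAm.trans_le hnA) (hpos A).le).le
  · rw [han, measureReal_sup_range_eq hmeas hindep hident (by omega)]
    exact one_fifth_le_one_sub_pow_sub_one_sub_pow measureReal_nonneg
      (tailProb_antitone (Nat.le_succ _)) (tailProb_le_one _) hlo hhi

end IID

theorem max_eq_a_add_l_io_one_small_l_general {Ω : Type*} [MeasureSpace Ω]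
    [IsProbabilityMeasure (ℙ : Measure Ω)] (ξ : ℕ → Ω → ℕ)
    (hmeas : ∀ i, Measurable (ξ i))
    (hindep : iIndepFun ξ ℙ)
    (hident : ∀ i, IdentDistrib (ξ i) (ξ 0) ℙ ℙ)
    (hpos : ∀ k : ℕ, 0 < ℙ {ω | ξ 0 ω = k})
    (R r : ℕ → ℝ)
    (hR : ∀ n, R n = -Real.log (ℙ {ω | n ≤ ξ 0 ω}).toReal)
    (hr : ∀ n : ℕ, 1 ≤ n → r n = R n - R (n - 1))
    (hrinf : Tendsto r atTop atTop)
    (a : ℕ → ℕ)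
    (ha : ∀ n : ℕ, 1 ≤ n →
      IsGreatest {k : ℕ | 1 / (n : ℝ) ≤ (ℙ {ω | k ≤ ξ 0 ω}).toReal} (a n))
    (l : ℕ) (hl : l ≤ 1) :
    ℙ (limsup (fun n => {ω | ((Finset.range n).sup fun i => ξ i ω) = a n + l})
        atTop) = 1 := by
  have htail_pos : ∀ k, 0 < tailProb ℙ (ξ 0) k := fun k =>
    ENNReal.toReal_pos ((hpos k).trans_le (measure_mono fun _ h => h.ge)).ne' (measure_ne_top _ _)
  have hlog : Tendsto (fun k => Real.log (tailProb ℙ (ξ 0) k) -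
      Real.log (tailProb ℙ (ξ 0) (k + 1))) atTop atTop := by
    refine ((tendsto_add_atTop_iff_nat 1).2 hrinf).congr fun k => ?_
    rw [hr (k + 1) (by omega), hR, hR, Nat.add_sub_cancel, tailProb, tailProb, measureReal_def,
      measureReal_def]
    ring
  have hfreq := frequently_one_fifth_le_measureReal_sup_range_eq hmeas hindep hident htail_pos
    (eventually_mul_le_of_tendsto_log_sub htail_pos hlog (by norm_num)) ha hl
  have hatop : Tendsto (fun n => a n + l) atTop atTop :=
    tendsto_atTop_mono (fun n => Nat.le_add_right _ _) (tendsto_atTop_of_isGreatest htail_pos ha)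
  refine (measure_limsup_setOf_sup_range_eq_zero_or_one hmeas hindep hatop).resolve_left
    fun h0 => ?_
  have h := le_measureReal_limsup_of_frequently_le
    (fun n => measurableSet_eq_fun (Finset.measurable_sup_apply fun i _ => hmeas i)
      (measurable_const (a := a n + l))) hfreq
  rw [measureReal_def, h0] at h
  norm_num at h

/-- Theorem 1(i): if `r` is monotone and `r(n) → ∞`, then for `l ∈ {0,1}`,
`P(ξ̄ₙ = aₙ + l  i.o.) = 1`. -/
theorem max_eq_a_add_l_io_one_small_l {Ω : Type*} [MeasureSpace Ω]
    [IsProbabilityMeasure (ℙ : Measure Ω)] (ξ : ℕ → Ω → ℕ)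
    (hmeas : ∀ i, Measurable (ξ i))
    (hindep : iIndepFun ξ ℙ)
    (hident : ∀ i, IdentDistrib (ξ i) (ξ 0) ℙ ℙ)
    (hpos : ∀ k : ℕ, 0 < ℙ {ω | ξ 0 ω = k})
    (R r : ℕ → ℝ)
    (hR : ∀ n, R n = -Real.log (ℙ {ω | n ≤ ξ 0 ω}).toReal)
    (hr : ∀ n : ℕ, 1 ≤ n → r n = R n - R (n - 1))
    (hrmono : Monotone r)
    (hrinf : Tendsto r atTop atTop)
    (a : ℕ → ℕ)
    (ha : ∀ n : ℕ, 1 ≤ n →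
      IsGreatest {k : ℕ | 1 / (n : ℝ) ≤ (ℙ {ω | k ≤ ξ 0 ω}).toReal} (a n))
    (l : ℕ) (hl : l ≤ 1) :
    ℙ (limsup (fun n => {ω | ((Finset.range n).sup fun i => ξ i ω) = a n + l})
        atTop) = 1 :=
  max_eq_a_add_l_io_one_small_l_general ξ hmeas hindep hident hpos R r hR hr hrinf a ha l hl
end

section
/- Let ξ, ξ_1, ξ_2, … be i.i.d. ℕ-valued with positive point masses, ξ̄_n the running maximum, r(n) = R(n) - R(n-1) monotone with r(n) → ∞, a_n = max{k : P(ξ ≥ k) ≥ 1/n}. Then P(ξ̄_n ≤ a_n - 1 infinitely often) = 1. -/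
/-!
Write `q k = P(ξ ≥ k)` and `n_k = ⌈1 / q k⌉`. Since `r → ∞`, eventually `q (k + 1) ≤ q k / 4`,
which forces `a (n_k) = k`; then `P(ξ̄_{n_k} < k) = (1 - q k) ^ n_k ≥ e⁻³`. By the reverse Fatou
inequality for sets, the event `{ξ̄_n < a_n i.o.}` has probability at least `e⁻³`. As `a_n → ∞`,
this event does not depend on any finitely many of the `ξ_i`, so by Kolmogorov's 0-1 law it has
probability one.
-/

open MeasureTheory ProbabilityTheory Filter

open scoped ENNReal Topology

lemma exp_neg_three_le_one_sub_pow {x : ℝ} {n : ℕ} (hx₀ : 0 ≤ x) (hx : x ≤ 1 / 2)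
    (hn : n * x ≤ 1 + x) : Real.exp (-3) ≤ (1 - x) ^ n := by
  -- `(1 - x) (1 + 2x) ≥ 1` on `[0, 1/2]`, and `1 + 2x ≤ exp (2x)`
  have hexp : Real.exp (-(2 * x)) ≤ 1 - x := by
    rw [Real.exp_neg, inv_le_iff_one_le_mul₀ (Real.exp_pos _)]
    nlinarith [Real.add_one_le_exp (2 * x)]
  calc Real.exp (-3) ≤ Real.exp (n * -(2 * x)) := Real.exp_le_exp.2 (by nlinarith)
    _ = Real.exp (-(2 * x)) ^ n := Real.exp_nat_mul _ n
    _ ≤ (1 - x) ^ n := pow_le_pow_left₀ (Real.exp_pos _).le hexp n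

lemma ceil_inv_mul_le_one_add {x : ℝ} (hx : 0 ≤ x) : (⌈x⁻¹⌉₊ : ℝ) * x ≤ 1 + x :=
  calc (⌈x⁻¹⌉₊ : ℝ) * x ≤ (x⁻¹ + 1) * x := by
        gcongr; exact (Nat.ceil_lt_add_one (inv_nonneg.2 hx)).le
    _ = x⁻¹ * x + x := by ring
    _ ≤ 1 + x := by gcongr; exact inv_mul_le_one_of_le₀ le_rfl hx

lemma eventually_four_mul_le_of_tendsto_log_sub {q : ℕ → ℝ} (hq : ∀ k, 0 < q k)
    (h : Tendsto (fun k => Real.log (q k) - Real.log (q (k + 1))) atTop atTop) :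
    ∀ᶠ k in atTop, 4 * q (k + 1) ≤ q k := by
  filter_upwards [h.eventually_ge_atTop (Real.log 4)] with k hk
  rw [← Real.log_le_log_iff (by positivity [hq (k + 1)]) (hq k),
    Real.log_mul (by norm_num) (hq _).ne']
  linarith

lemma tendsto_atTop_of_isGreatest_one_div_le {q : ℕ → ℝ} (hq : ∀ k, 0 < q k) {a : ℕ → ℕ}
    (ha : ∀ n : ℕ, 1 ≤ n → IsGreatest {k : ℕ | 1 / (n : ℝ) ≤ q k} (a n)) :
    Tendsto a atTop atTop := by
  refine tendsto_atTop_atTop.2 fun k => ⟨max 1 ⌈(q k)⁻¹⌉₊, fun n hn => (ha n ?_).2 ?_⟩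
  · exact le_of_max_le_left hn
  · rw [Set.mem_ofPred_eq, one_div]
    exact inv_le_of_inv_le₀ (hq k) (Nat.ceil_le.1 (le_of_max_le_right hn))

lemma isGreatest_ceil_inv {q : ℕ → ℝ} (hq : Antitone q) {k : ℕ} (hk₀ : 0 < q k) (hk₁ : q k ≤ 1)
    (hdecay : 4 * q (k + 1) ≤ q k) :
    IsGreatest {j : ℕ | 1 / (⌈(q k)⁻¹⌉₊ : ℝ) ≤ q j} k := by
  set n := ⌈(q k)⁻¹⌉₊
  have hge : (q k)⁻¹ ≤ n := Nat.le_ceil _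
  have hn : (0 : ℝ) < n := (inv_pos.2 hk₀).trans_le hge
  refine ⟨?_, fun j hj => ?_⟩
  · rw [Set.mem_ofPred_eq, one_div]
    exact inv_le_of_inv_le₀ hk₀ hge
  · by_contra! hkj
    rw [Set.mem_ofPred_eq, div_le_iff₀ hn] at hj
    have : (4 : ℝ) < 4 := calc
      4 ≤ 4 * (q j * n) := by linarith
      _ ≤ 4 * q (k + 1) * n := by rw [← mul_assoc]; gcongr; exact hq hkj
      _ ≤ q k * n := by gcongr
      _ ≤ 1 + q k := by rw [mul_comm]; exact ceil_inv_mul_le_one_add hk₀.le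
      _ < 4 := by linarith
    exact lt_irrefl _ this

lemma le_measure_limsup_of_frequently_le {α : Type*} [MeasurableSpace α] {μ : Measure α}
    [IsFiniteMeasure μ] {s : ℕ → Set α} (hs : ∀ n, MeasurableSet (s n)) {δ : ℝ≥0∞}
    (h : ∃ᶠ n in atTop, δ ≤ μ (s n)) : δ ≤ μ (limsup s atTop) := by
  rw [limsup_eq_iInf_iSup_of_nat]
  simp only [Set.iSup_eq_iUnion, Set.iInf_eq_iInter]
  rw [Antitone.measure_iInter]
  · refine le_iInf fun N => ?_
    obtain ⟨n, hn, hδ⟩ := frequently_atTop.1 h N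
    exact hδ.trans (measure_mono (Set.subset_biUnion_of_mem (u := s) hn))
  · exact fun N M hNM => Set.biUnion_mono (fun n hn => hNM.trans hn) fun _ _ => le_rfl
  · exact fun N => (MeasurableSet.biUnion (Set.to_countable _) fun n _ => hs n).nullMeasurableSet
  · exact ⟨0, measure_ne_top _ _⟩

lemma natCast_range_sup_le_sub_one_iff {f : ℕ → ℕ} {n c : ℕ} (hn : 1 ≤ n) :
    (((Finset.range n).sup f : ℕ) : ℤ) ≤ (c : ℤ) - 1 ↔ ∀ i < n, f i < c := by
  rw [Int.le_sub_one_iff, Nat.cast_lt,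
    ← Finset.sup'_eq_sup (Finset.nonempty_range_iff.2 (by omega)), Finset.sup'_lt_iff]
  simp only [Finset.mem_range]

section IidSequence

variable {Ω : Type*} {ξ : ℕ → Ω → ℕ}

lemma measurableSet_tail_limsup_forall_lt {c : ℕ → ℕ} (hc : Tendsto c atTop atTop) :
    MeasurableSet[limsup (fun i => MeasurableSpace.comap (ξ i) inferInstance) atTop]
      (limsup (fun n => {ω | ∀ i < n, ξ i ω < c n}) atTop) := by
  rw [limsup_eq_iInf_iSup_of_nat (u := fun i => MeasurableSpace.comap (ξ i) inferInstance),
    MeasurableSpace.measurableSet_iInf]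
  intro N
  let mN : MeasurableSpace Ω := ⨆ j ≥ N, MeasurableSpace.comap (ξ j) inferInstance
  have hξ : ∀ i ≥ N, Measurable[mN] (ξ i) :=
    fun i hi => (comap_measurable (ξ i)).mono
      (le_iSup₂ (f := fun j _ => MeasurableSpace.comap (ξ j) inferInstance) i hi) le_rfl
  -- the first `N` values are eventually below `c n`, so only the indices `≥ N` matter
  have htail : limsup (fun n => {ω | ∀ i < n, ξ i ω < c n}) atTop =
      limsup (fun n => ⋂ i ∈ Finset.Ico N n, ξ i ⁻¹' Set.Iio (c n)) atTop := by
    ext ω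
    simp only [mem_limsup_iff_frequently_mem, Set.mem_ofPred_eq, Set.mem_iInter₂,
      Finset.mem_Ico, Set.mem_preimage, Set.mem_Iio]
    refine frequently_congr ?_
    filter_upwards [hc.eventually_gt_atTop ((Finset.range N).sup (ξ · ω))] with n hn
    refine ⟨fun h i hi => h i hi.2, fun h i hi => ?_⟩
    by_cases hiN : N ≤ i
    · exact h i ⟨hiN, hi⟩
    · exact (Finset.le_sup (f := (ξ · ω)) (Finset.mem_range.2 (not_le.1 hiN))).trans_lt hn
  rw [htail]
  exact @MeasurableSet.measurableSet_limsup _ mN _ fun n =>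
    Finset.measurableSet_biInter _ fun i hi => hξ i (Finset.mem_Ico.1 hi).1 measurableSet_Iio

variable [MeasurableSpace Ω] {μ : Measure Ω}

lemma tendsto_measure_setOf_le_atTop [IsFiniteMeasure μ] {f : Ω → ℕ} (hf : Measurable f) :
    Tendsto (fun k => μ {ω | k ≤ f ω}) atTop (𝓝 0) := by
  have hempty : ⋂ k, {ω | k ≤ f ω} = ∅ :=
    Set.eq_empty_of_forall_notMem fun ω hω =>
      (Nat.lt_succ_self (f ω)).not_ge (Set.mem_iInter.1 hω (f ω + 1))
  have h := tendsto_measure_iInter_atTop (μ := μ) (s := fun k => {ω | k ≤ f ω})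
    (fun k => (measurableSet_le measurable_const hf).nullMeasurableSet)
    (fun k l hkl ω hω => hkl.trans hω) ⟨0, measure_ne_top _ _⟩
  rwa [hempty, measure_empty] at h

lemma measure_forall_lt_eq_pow (hindep : iIndepFun ξ μ)
    (hident : ∀ i, IdentDistrib (ξ i) (ξ 0) μ μ) (c n : ℕ) :
    μ {ω | ∀ i < n, ξ i ω < c} = μ {ω | ξ 0 ω < c} ^ n := by
  have hset : {ω | ∀ i < n, ξ i ω < c} = ⋂ i ∈ Finset.range n, ξ i ⁻¹' Set.Iio c := by
    ext ω; simp
  rw [hset, hindep.meas_biInter fun i _ => ⟨Set.Iio c, measurableSet_Iio, rfl⟩,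
    Finset.prod_congr rfl fun i _ => (hident i).measure_mem_eq measurableSet_Iio,
    Finset.prod_const, Finset.card_range]
  rfl

lemma exp_neg_three_le_measure_forall_lt [IsProbabilityMeasure μ] (hmeas : Measurable (ξ 0))
    (hindep : iIndepFun ξ μ) (hident : ∀ i, IdentDistrib (ξ i) (ξ 0) μ μ) {k : ℕ}
    (hk : (μ {ω | k ≤ ξ 0 ω}).toReal ≤ 1 / 2) :
    ENNReal.ofReal (Real.exp (-3)) ≤
      μ {ω | ∀ i < ⌈(μ {ω | k ≤ ξ 0 ω}).toReal⁻¹⌉₊, ξ i ω < k} := by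
  have hq₀ : 0 ≤ (μ {ω | k ≤ ξ 0 ω}).toReal := ENNReal.toReal_nonneg
  have hlt : {ω | ξ 0 ω < k} = {ω | k ≤ ξ 0 ω}ᶜ := by ext; simp
  rw [ENNReal.ofReal_le_iff_le_toReal (measure_ne_top _ _), measure_forall_lt_eq_pow hindep hident,
    ENNReal.toReal_pow, hlt, ← measureReal_def,
    probReal_compl_eq_one_sub (measurableSet_le measurable_const hmeas)]
  exact exp_neg_three_le_one_sub_pow hq₀ hk (ceil_inv_mul_le_one_add hq₀)

lemma frequently_exp_neg_three_le_measure_forall_lt [IsProbabilityMeasure μ]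
    (hmeas : Measurable (ξ 0)) (hindep : iIndepFun ξ μ)
    (hident : ∀ i, IdentDistrib (ξ i) (ξ 0) μ μ) (hpos : ∀ k, 0 < (μ {ω | k ≤ ξ 0 ω}).toReal)
    (hdecay : ∀ᶠ k in atTop, 4 * (μ {ω | k + 1 ≤ ξ 0 ω}).toReal ≤ (μ {ω | k ≤ ξ 0 ω}).toReal)
    {a : ℕ → ℕ}
    (ha : ∀ n : ℕ, 1 ≤ n → IsGreatest {k : ℕ | 1 / (n : ℝ) ≤ (μ {ω | k ≤ ξ 0 ω}).toReal} (a n)) :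
    ∃ᶠ n in atTop, ENNReal.ofReal (Real.exp (-3)) ≤ μ {ω | ∀ i < n, ξ i ω < a n} := by
  set q : ℕ → ℝ := fun k => (μ {ω | k ≤ ξ 0 ω}).toReal
  have hq_anti : Antitone q := fun k l hkl =>
    ENNReal.toReal_mono (measure_ne_top _ _) (measure_mono fun ω (h : l ≤ ξ 0 ω) => hkl.trans h)
  have hq_lim : Tendsto q atTop (𝓝 0) :=
    (ENNReal.tendsto_toReal ENNReal.zero_ne_top).comp (tendsto_measure_setOf_le_atTop hmeas)
  have hlevel : ∀ᶠ k in atTop, a ⌈(q k)⁻¹⌉₊ = k ∧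
      ENNReal.ofReal (Real.exp (-3)) ≤ μ {ω | ∀ i < ⌈(q k)⁻¹⌉₊, ξ i ω < k} := by
    filter_upwards [hdecay, hq_lim.eventually (eventually_le_nhds (by norm_num : (0 : ℝ) < 1 / 2))]
      with k hk hk'
    exact ⟨(ha _ (Nat.ceil_pos.2 (inv_pos.2 (hpos k)))).unique
      (isGreatest_ceil_inv hq_anti (hpos k) measureReal_le_one hk),
      exp_neg_three_le_measure_forall_lt hmeas hindep hident hk'⟩
  have hn_lim : Tendsto (fun k => ⌈(q k)⁻¹⌉₊) atTop atTop :=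
    tendsto_nat_ceil_atTop.comp (tendsto_inv_nhdsGT_zero.comp
      (tendsto_nhdsWithin_iff.2 ⟨hq_lim, .of_forall hpos⟩))
  exact hn_lim.frequently <| hlevel.frequently.mono fun k ⟨hak, hk⟩ => by rwa [hak]

theorem measure_limsup_forall_lt_eq_one [IsProbabilityMeasure μ] (hmeas : ∀ i, Measurable (ξ i))
    (hindep : iIndepFun ξ μ) {c : ℕ → ℕ} (hc : Tendsto c atTop atTop) {δ : ℝ≥0∞} (hδ : δ ≠ 0)
    (h : ∃ᶠ n in atTop, δ ≤ μ {ω | ∀ i < n, ξ i ω < c n}) :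
    μ (limsup (fun n => {ω | ∀ i < n, ξ i ω < c n}) atTop) = 1 := by
  have hmeas_set : ∀ n, MeasurableSet {ω | ∀ i < n, ξ i ω < c n} := fun n => by
    simp only [Set.ofPred_forall]
    exact .iInter fun i => .iInter fun _ => measurableSet_lt (hmeas i) measurable_const
  refine (measure_zero_or_one_of_measurableSet_limsup_atTop (fun i => (hmeas i).comap_le)
    hindep.iIndep (measurableSet_tail_limsup_forall_lt hc)).resolve_left fun h0 => hδ ?_
  exact le_zero_iff.1 (h0 ▸ le_measure_limsup_of_frequently_le hmeas_set h)

end IidSequence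

theorem max_le_a_sub_one_io_one_general {Ω : Type*} [MeasureSpace Ω]
    [IsProbabilityMeasure (ℙ : Measure Ω)] (ξ : ℕ → Ω → ℕ)
    (hmeas : ∀ i, Measurable (ξ i))
    (hindep : iIndepFun ξ ℙ)
    (hident : ∀ i, IdentDistrib (ξ i) (ξ 0) ℙ ℙ)
    (hpos : ∀ k : ℕ, 0 < ℙ {ω | ξ 0 ω = k})
    (R r : ℕ → ℝ)
    (hR : ∀ n, R n = -Real.log (ℙ {ω | n ≤ ξ 0 ω}).toReal)
    (hr : ∀ n : ℕ, 1 ≤ n → r n = R n - R (n - 1))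
    (hrinf : Tendsto r atTop atTop)
    (a : ℕ → ℕ)
    (ha : ∀ n : ℕ, 1 ≤ n →
      IsGreatest {k : ℕ | 1 / (n : ℝ) ≤ (ℙ {ω | k ≤ ξ 0 ω}).toReal} (a n)) :
    ℙ (limsup (fun n =>
        {ω | (((Finset.range n).sup fun i => ξ i ω : ℕ) : ℤ) ≤ (a n : ℤ) - 1})
      atTop) = 1 := by
  have hq_pos : ∀ k, 0 < (ℙ {ω | k ≤ ξ 0 ω}).toReal := fun k => ENNReal.toReal_pos
    ((hpos k).trans_le (measure_mono fun ω (h : ξ 0 ω = k) => h.ge)).ne' (measure_ne_top _ _)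
  have hdecay : ∀ᶠ k in atTop,
      4 * (ℙ {ω | k + 1 ≤ ξ 0 ω}).toReal ≤ (ℙ {ω | k ≤ ξ 0 ω}).toReal := by
    refine eventually_four_mul_le_of_tendsto_log_sub hq_pos
      ((hrinf.comp (tendsto_add_atTop_nat 1)).congr fun k => ?_)
    rw [Function.comp_apply, hr (k + 1) le_add_self, add_tsub_cancel_right, hR, hR]
    ring
  have hevent : ∀ᶠ n in atTop,
      {ω | (((Finset.range n).sup fun i => ξ i ω : ℕ) : ℤ) ≤ (a n : ℤ) - 1} =
        {ω | ∀ i < n, ξ i ω < a n} := by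
    filter_upwards [eventually_ge_atTop 1] with n hn
    ext ω
    exact natCast_range_sup_le_sub_one_iff hn
  rw [limsup_congr hevent]
  exact measure_limsup_forall_lt_eq_one hmeas hindep
    (tendsto_atTop_of_isGreatest_one_div_le hq_pos ha) (by positivity)
    (frequently_exp_neg_three_le_measure_forall_lt (hmeas 0) hindep hident hq_pos hdecay ha)

/-- Theorem 2(i): `P(ξ̄ₙ ≤ aₙ - 1  i.o.) = 1`. -/
theorem max_le_a_sub_one_io_one {Ω : Type*} [MeasureSpace Ω]
    [IsProbabilityMeasure (ℙ : Measure Ω)] (ξ : ℕ → Ω → ℕ)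
    (hmeas : ∀ i, Measurable (ξ i))
    (hindep : iIndepFun ξ ℙ)
    (hident : ∀ i, IdentDistrib (ξ i) (ξ 0) ℙ ℙ)
    (hpos : ∀ k : ℕ, 0 < ℙ {ω | ξ 0 ω = k})
    (R r : ℕ → ℝ)
    (hR : ∀ n, R n = -Real.log (ℙ {ω | n ≤ ξ 0 ω}).toReal)
    (hr : ∀ n : ℕ, 1 ≤ n → r n = R n - R (n - 1))
    (hrmono : Monotone r)
    (hrinf : Tendsto r atTop atTop)
    (a : ℕ → ℕ)
    (ha : ∀ n : ℕ, 1 ≤ n →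
      IsGreatest {k : ℕ | 1 / (n : ℝ) ≤ (ℙ {ω | k ≤ ξ 0 ω}).toReal} (a n)) :
    ℙ (limsup (fun n =>
        {ω | (((Finset.range n).sup fun i => ξ i ω : ℕ) : ℤ) ≤ (a n : ℤ) - 1})
      atTop) = 1 :=
  max_le_a_sub_one_io_one_general ξ hmeas hindep hident hpos R r hR hr hrinf a ha
end

section
/- With ξ i.i.d. ℕ-valued, positive point masses, r monotone, r(n) → ∞, a_n = max{k : P(ξ ≥ k) ≥ 1/n}, and a fixed integer l > 1: P(ξ̄_n ≤ a_n - l infinitely often) equals 0 if ∑_{k≥1} exp(-exp((l-1) r(k))) < ∞, and equals 1 if this series diverges. -/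
/-!
Since `k ≤ a n` exactly when `⌈e^{R k}⌉ ≤ n`, the event `ξ̄ₙ ≤ aₙ - l` happens infinitely often
iff, with `d = l - 1`, the events `D c = {ξ̄_{m c} < c}`, `m c = ⌈e^{R (c + d)}⌉`, do. By
independence `P(D c) = (1 - e^{-R c})^{m c} ≈ exp(-e^{R (c + d) - R c})`, and monotonicity of `r`
gives `d r(c + 1) ≤ R (c + d) - R c ≤ d r(c + d)`. The resulting upper bound on `P(D c)` and
Borel–Cantelli settle the convergent case. In the divergent case, `D c` and `D c'` are
independent up to a factor `e³` once `c + d ≤ c'`, so a Chung–Erdős (Kochen–Stone) estimate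
gives `P(D c i.o.) > 0`, using only the indices with `e^{d r(c + d)} ≤ c` (the others form a
convergent series); Kolmogorov's zero-one law turns this into `1`.
-/

open MeasureTheory ProbabilityTheory Filter Topology
open scoped ENNReal

lemma one_sub_pow_le_exp_neg_mul {x : ℝ} (hx : x ≤ 1) (n : ℕ) :
    (1 - x) ^ n ≤ Real.exp (-(n * x)) := by
  rw [show -(n * x) = n * -x by ring, Real.exp_nat_mul]
  exact pow_le_pow_left₀ (by linarith) (Real.one_sub_le_exp_neg x) n

lemma exp_neg_mul_div_le_one_sub_pow {x : ℝ} (hx : x < 1) (n : ℕ) :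
    Real.exp (-(n * x / (1 - x))) ≤ (1 - x) ^ n := by
  have hlog : -(x / (1 - x)) ≤ Real.log (1 - x) := by
    have h : 1 - (1 - x)⁻¹ = -(x / (1 - x)) := by
      have := (sub_pos.2 hx).ne'
      field_simp
      ring
    exact h ▸ Real.one_sub_inv_le_log_of_pos (sub_pos.2 hx)
  calc Real.exp (-(n * x / (1 - x))) = Real.exp (-(x / (1 - x))) ^ n := by
        rw [← Real.exp_nat_mul]; ring_nf
    _ ≤ Real.exp (Real.log (1 - x)) ^ n := by gcongr
    _ = (1 - x) ^ n := by rw [Real.exp_log (sub_pos.2 hx)]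

lemma exp_neg_le_one_sub_exp_neg_pow_ceil {a b X : ℝ} (hX : 0 ≤ X)
    (hab : Real.exp (a - b) ≤ X) (hsmall : (X + 2) * Real.exp (-b) ≤ 1) :
    Real.exp (-(X + 2)) ≤ (1 - Real.exp (-b)) ^ ⌈Real.exp a⌉₊ := by
  set x := Real.exp (-b)
  have hx : 0 < x := Real.exp_pos _
  have hx1 : x < 1 := by nlinarith
  have hceil : (⌈Real.exp a⌉₊ : ℝ) * x ≤ X + x := by
    have h := mul_le_mul_of_nonneg_right (Nat.ceil_lt_add_one (Real.exp_pos a).le).le hx.le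
    rw [add_mul, one_mul, ← Real.exp_add, ← sub_eq_add_neg] at h
    linarith
  refine le_trans (Real.exp_le_exp.2 ?_) (exp_neg_mul_div_le_one_sub_pow hx1 _)
  rw [neg_le_neg_iff, div_le_iff₀ (by linarith)]
  nlinarith

section MonotoneIncrements

variable {R r : ℕ → ℝ}

lemma mul_le_sub_of_monotone_increments (hRr : ∀ n, R (n + 1) = R n + r (n + 1))
    (hr : Monotone r) (c d : ℕ) : d * r (c + 1) ≤ R (c + d) - R c := by
  induction d with
  | zero => simp
  | succ d ih =>
    rw [← add_assoc, hRr]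
    have := hr (show c + 1 ≤ c + d + 1 by omega)
    push_cast
    linarith

lemma sub_le_mul_of_monotone_increments (hRr : ∀ n, R (n + 1) = R n + r (n + 1))
    (hr : Monotone r) (c d : ℕ) : R (c + d) - R c ≤ d * r (c + d) := by
  induction d with
  | zero => simp
  | succ d ih =>
    rw [← add_assoc, hRr]
    have := mul_le_mul_of_nonneg_left (hr (show c + d ≤ c + d + 1 by omega)) d.cast_nonneg
    push_cast
    linarith

lemma tendsto_atTop_of_monotone_increments (hRr : ∀ n, R (n + 1) = R n + r (n + 1))
    (hr : Monotone r) (hrinf : Tendsto r atTop atTop) : Tendsto R atTop atTop := by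
  obtain ⟨K, hK⟩ := eventually_atTop.1 (hrinf.eventually_ge_atTop 1)
  rw [← tendsto_add_atTop_iff_nat K]
  refine tendsto_atTop_mono (fun j => ?_)
    (tendsto_atTop_add_const_left _ (R K) tendsto_natCast_atTop_atTop)
  have h1 := mul_le_sub_of_monotone_increments hRr hr K j
  have h2 := mul_le_mul_of_nonneg_left (hK (K + 1) K.le_succ) j.cast_nonneg
  rw [add_comm j K]
  linarith

lemma eventually_add_mul_exp_neg_le_one (hRr : ∀ n, R (n + 1) = R n + r (n + 1))
    (hr : Monotone r) (hrinf : Tendsto r atTop atTop) (a : ℝ) :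
    ∀ᶠ c : ℕ in atTop, (c + a) * Real.exp (-R c) ≤ 1 := by
  have hR' : Tendsto (fun c : ℕ => R c - c) atTop atTop :=
    tendsto_atTop_of_monotone_increments (r := fun n => r n - 1)
      (fun n => by rw [hRr]; push_cast; ring) (fun m n h => by simpa using hr h)
      (tendsto_atTop_add_const_right _ _ hrinf)
  filter_upwards [hR'.eventually_ge_atTop (Real.log (1 + |a|))] with c hc
  have hexp : (c + a) ≤ (1 + |a|) * Real.exp c := by
    nlinarith [Real.add_one_le_exp (c : ℝ), le_abs_self a, abs_nonneg a, c.cast_nonneg (α := ℝ)]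
  calc (c + a) * Real.exp (-R c) ≤ (1 + |a|) * Real.exp c * Real.exp (-R c) := by gcongr
    _ = (1 + |a|) * Real.exp (-(R c - c)) := by
        rw [mul_assoc, ← Real.exp_add]; ring_nf
    _ ≤ 1 := by
        rw [← le_div_iff₀' (by positivity), Real.exp_neg, ← one_div]
        gcongr
        rw [← Real.exp_log (by positivity : (0 : ℝ) < 1 + |a|)]
        exact Real.exp_le_exp.2 hc

lemma one_sub_exp_neg_pow_ceil_le (hRr : ∀ n, R (n + 1) = R n + r (n + 1))
    (hr : Monotone r) {c : ℕ} (hRc : Real.exp (-R c) ≤ 1) (d : ℕ) :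
    (1 - Real.exp (-R c)) ^ ⌈Real.exp (R (c + d))⌉₊ ≤ Real.exp (-Real.exp (d * r (c + 1))) := by
  calc (1 - Real.exp (-R c)) ^ ⌈Real.exp (R (c + d))⌉₊
      ≤ Real.exp (-(⌈Real.exp (R (c + d))⌉₊ * Real.exp (-R c))) :=
        one_sub_pow_le_exp_neg_mul hRc _
    _ ≤ Real.exp (-(Real.exp (R (c + d)) * Real.exp (-R c))) := by
        gcongr
        exact Nat.le_ceil _
    _ = Real.exp (-Real.exp (R (c + d) - R c)) := by rw [← Real.exp_add, sub_eq_add_neg]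
    _ ≤ Real.exp (-Real.exp (d * r (c + 1))) := by
        gcongr
        exact mul_le_sub_of_monotone_increments hRr hr c d

end MonotoneIncrements

lemma not_summable_indicator_exp_neg {X : ℕ → ℝ} (N : ℕ)
    (h : ¬Summable fun c => Real.exp (-X c)) :
    ¬Summable ({c : ℕ | N ≤ c ∧ X c ≤ c}.indicator fun c => Real.exp (-X c)) := by
  refine fun hG => h ((hG.add Real.summable_exp_neg_nat).of_norm_bounded_eventually_nat
    (eventually_atTop.2 ⟨N, fun c hc => ?_⟩))
  rw [Real.norm_of_nonneg (Real.exp_pos _).le]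
  by_cases hXc : X c ≤ c
  · rw [Set.indicator_of_mem (show c ∈ {c : ℕ | N ≤ c ∧ X c ≤ c} from ⟨hc, hXc⟩)]
    linarith [Real.exp_pos (-(c : ℝ))]
  · rw [Set.indicator_of_notMem fun hc' => hXc hc'.2, zero_add]
    exact Real.exp_le_exp.2 (by linarith)


lemma ENNReal.tsum_eq_top_of_not_summable_le {ι : Type*} {f : ι → ℝ≥0∞} {u : ι → ℝ}
    (hu : ¬Summable u) (hu₀ : ∀ i, 0 ≤ u i) (hle : ∀ i, u i ≤ (f i).toReal) :
    ∑' i, f i = ∞ := by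
  by_contra h
  exact hu ((ENNReal.summable_toReal h).of_nonneg_of_le hu₀ hle)

section ChungErdos

variable {Ω : Type*} [MeasurableSpace Ω]

lemma lintegral_mul_sq_le (μ : Measure Ω) {f g : Ω → ℝ≥0∞} (hf : AEMeasurable f μ)
    (hg : AEMeasurable g μ) :
    (∫⁻ ω, f ω * g ω ∂μ) ^ 2 ≤ (∫⁻ ω, f ω ^ 2 ∂μ) * ∫⁻ ω, g ω ^ 2 ∂μ := by
  have hCS := ENNReal.lintegral_mul_le_Lp_mul_Lq μ Real.HolderConjugate.two_two hf hg
  simp only [ENNReal.rpow_two, Pi.mul_apply] at hCS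
  calc (∫⁻ ω, f ω * g ω ∂μ) ^ 2
      ≤ ((∫⁻ ω, f ω ^ 2 ∂μ) ^ (1 / 2 : ℝ) * (∫⁻ ω, g ω ^ 2 ∂μ) ^ (1 / 2 : ℝ)) ^ 2 := by gcongr
    _ = (∫⁻ ω, f ω ^ 2 ∂μ) * ∫⁻ ω, g ω ^ 2 ∂μ := by
      rw [mul_pow, ← ENNReal.rpow_natCast, ← ENNReal.rpow_natCast (_ ^ _), ← ENNReal.rpow_mul,
        ← ENNReal.rpow_mul]
      norm_num

/-- The Chung–Erdős inequality. -/
theorem sq_sum_measure_le_measure_biUnion_mul {ι : Type*} (μ : Measure Ω) {D : ι → Set Ω}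
    (hD : ∀ k, MeasurableSet (D k)) (F : Finset ι) :
    (∑ k ∈ F, μ (D k)) ^ 2 ≤ μ (⋃ k ∈ F, D k) * ∑ j ∈ F, ∑ k ∈ F, μ (D j ∩ D k) := by
  set U := ⋃ k ∈ F, D k
  have hU : MeasurableSet U := .biUnion F.countable_toSet fun k _ => hD k
  set T : Ω → ℝ≥0∞ := fun ω => ∑ k ∈ F, (D k).indicator 1 ω
  have hT : Measurable T := Finset.measurable_sum _ fun k _ => measurable_one.indicator (hD k)
  have hT_eq : ∀ ω, U.indicator 1 ω * T ω = T ω := by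
    intro ω
    by_cases hω : ω ∈ U
    · simp [Set.indicator_of_mem hω]
    · rw [Set.indicator_of_notMem hω, zero_mul]
      exact (Finset.sum_eq_zero fun k hk =>
        Set.indicator_of_notMem (fun hωk => hω (Set.mem_biUnion hk hωk)) _).symm
  have hT_sq : ∀ ω, T ω ^ 2 = ∑ j ∈ F, ∑ k ∈ F, (D j ∩ D k).indicator 1 ω := by
    intro ω
    simp only [T, sq, Finset.sum_mul_sum, Set.inter_indicator_one, Pi.mul_apply]
  have hU_sq : ∀ ω, (U.indicator 1 ω : ℝ≥0∞) ^ 2 = U.indicator 1 ω := by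
    intro ω
    by_cases hω : ω ∈ U <;> simp [hω]
  have hmeas_inter : ∀ j k, Measurable ((D j ∩ D k).indicator (1 : Ω → ℝ≥0∞)) :=
    fun j k => measurable_one.indicator ((hD j).inter (hD k))
  calc (∑ k ∈ F, μ (D k)) ^ 2 = (∫⁻ ω, U.indicator 1 ω * T ω ∂μ) ^ 2 := by
        simp_rw [hT_eq, T]
        rw [lintegral_finsetSum _ fun k _ => measurable_one.indicator (hD k)]
        simp_rw [lintegral_indicator_one (hD _)]
    _ ≤ (∫⁻ ω, U.indicator 1 ω ^ 2 ∂μ) * ∫⁻ ω, T ω ^ 2 ∂μ :=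
        lintegral_mul_sq_le μ (measurable_one.indicator hU).aemeasurable hT.aemeasurable
    _ = μ U * ∑ j ∈ F, ∑ k ∈ F, μ (D j ∩ D k) := by
        simp_rw [hU_sq, hT_sq, lintegral_indicator_one hU]
        rw [lintegral_finsetSum _ fun j _ => Finset.measurable_sum _ fun k _ => hmeas_inter j k]
        simp_rw [lintegral_finsetSum _ fun k _ => hmeas_inter _ k,
          lintegral_indicator_one ((hD _).inter (hD _))]

end ChungErdos

section QuasiIndependent

variable {Ω : Type*} [MeasurableSpace Ω] {μ : Measure Ω} {D : ℕ → Set Ω} {C : ℝ≥0∞} {l : ℕ}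

lemma inv_add_one_le_measure_biUnion [IsFiniteMeasure μ] (hD : ∀ k, MeasurableSet (D k))
    (hinter : ∀ j k, j + l ≤ k → μ (D j ∩ D k) ≤ C * μ (D j) * μ (D k)) {F : Finset ℕ}
    (hF : 2 * l ≤ ∑ k ∈ F, μ (D k)) (hF₀ : ∑ k ∈ F, μ (D k) ≠ 0) :
    (C + 1)⁻¹ ≤ μ (⋃ k ∈ F, D k) := by
  set S := ∑ k ∈ F, μ (D k)
  have hS : S ≠ ∞ := (ENNReal.sum_lt_top.2 fun k _ => measure_lt_top μ (D k)).ne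
  have hrow : ∀ j ∈ F, ∑ k ∈ F, μ (D j ∩ D k) ≤ C * μ (D j) * S + 2 * l * μ (D j) := by
    intro j _
    rw [← Finset.sum_filter_add_sum_filter_not F fun k => j + l ≤ k ∨ k + l ≤ j]
    gcongr
    · calc ∑ k ∈ F with j + l ≤ k ∨ k + l ≤ j, μ (D j ∩ D k)
          ≤ ∑ k ∈ F with j + l ≤ k ∨ k + l ≤ j, C * μ (D j) * μ (D k) := by
            refine Finset.sum_le_sum fun k hk => ?_
            rcases (Finset.mem_filter.1 hk).2 with h | h
            · exact hinter j k h
            · rw [Set.inter_comm, mul_right_comm]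
              exact hinter k j h
        _ ≤ C * μ (D j) * S := by
            rw [Finset.mul_sum]
            exact Finset.sum_le_sum_of_subset (Finset.filter_subset _ _)
    · have hnear : {k ∈ F | ¬(j + l ≤ k ∨ k + l ≤ j)} ⊆ Finset.Ico (j + 1 - l) (j + l) := by
        intro k hk
        simp only [Finset.mem_filter, Finset.mem_Ico] at hk ⊢
        omega
      have hcard : ({k ∈ F | ¬(j + l ≤ k ∨ k + l ≤ j)}.card : ℝ≥0∞) ≤ 2 * l := by
        have := (Finset.card_le_card hnear).trans_eq (Nat.card_Ico _ _)
        exact_mod_cast this.trans (by omega)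
      calc ∑ k ∈ F with ¬(j + l ≤ k ∨ k + l ≤ j), μ (D j ∩ D k)
          ≤ {k ∈ F | ¬(j + l ≤ k ∨ k + l ≤ j)}.card * μ (D j) := by
            rw [← nsmul_eq_mul]
            exact Finset.sum_le_card_nsmul _ _ _ fun k _ => measure_mono Set.inter_subset_left
        _ ≤ 2 * l * μ (D j) := by gcongr
  have hpairs : ∑ j ∈ F, ∑ k ∈ F, μ (D j ∩ D k) ≤ (C + 1) * S ^ 2 :=
    calc ∑ j ∈ F, ∑ k ∈ F, μ (D j ∩ D k) ≤ ∑ j ∈ F, (C * μ (D j) * S + 2 * l * μ (D j)) :=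
          Finset.sum_le_sum hrow
      _ = C * S ^ 2 + 2 * l * S := by
          rw [Finset.sum_add_distrib, ← Finset.sum_mul, ← Finset.mul_sum, ← Finset.mul_sum]
          ring
      _ ≤ C * S ^ 2 + S * S := by gcongr
      _ = (C + 1) * S ^ 2 := by ring
  have hone : 1 ≤ (C + 1) * μ (⋃ k ∈ F, D k) := by
    refine (ENNReal.mul_le_mul_iff_left (pow_ne_zero 2 hF₀) (ENNReal.pow_ne_top hS)).1 ?_
    calc 1 * S ^ 2 ≤ μ (⋃ k ∈ F, D k) * ∑ j ∈ F, ∑ k ∈ F, μ (D j ∩ D k) := by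
          rw [one_mul]; exact sq_sum_measure_le_measure_biUnion_mul μ hD F
      _ ≤ μ (⋃ k ∈ F, D k) * ((C + 1) * S ^ 2) := by gcongr
      _ = (C + 1) * μ (⋃ k ∈ F, D k) * S ^ 2 := by ring
  calc (C + 1)⁻¹ = (C + 1)⁻¹ * 1 := (mul_one _).symm
    _ ≤ (C + 1)⁻¹ * ((C + 1) * μ (⋃ k ∈ F, D k)) := by gcongr
    _ ≤ μ (⋃ k ∈ F, D k) := by
        rw [← mul_assoc]
        exact mul_le_of_le_one_left' (ENNReal.inv_mul_le_one _)

/-- A Kochen–Stone type bound. -/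
theorem inv_add_one_le_measure_limsup [IsFiniteMeasure μ] (hD : ∀ k, MeasurableSet (D k))
    (hinter : ∀ j k, j + l ≤ k → μ (D j ∩ D k) ≤ C * μ (D j) * μ (D k))
    (hsum : ∑' k, μ (D k) = ∞) : (C + 1)⁻¹ ≤ μ (limsup D atTop) := by
  have htail : ∀ N, (C + 1)⁻¹ ≤ μ (⋃ k ≥ N, D k) := by
    intro N
    have hN : ∑ k ∈ Finset.range N, μ (D k) ≠ ∞ :=
      (ENNReal.sum_lt_top.2 fun k _ => measure_lt_top μ (D k)).ne
    obtain ⟨n, hn⟩ := ((ENNReal.tendsto_nat_tsum _).eventually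
      (lt_mem_nhds (hsum ▸ by finiteness :
        ∑ k ∈ Finset.range N, μ (D k) + (2 * l + 1) < ∑' k, μ (D k)))).exists_forall_of_atTop
    have hNn := hn (max n N) (le_max_left _ _)
    rw [← Finset.sum_range_add_sum_Ico _ (le_max_right n N),
      ENNReal.add_lt_add_iff_left hN] at hNn
    refine (inv_add_one_le_measure_biUnion hD hinter (le_self_add.trans hNn.le)
      (ne_bot_of_gt hNn)).trans (measure_mono ?_)
    exact Set.biUnion_mono (fun k hk => (Finset.mem_Ico.1 hk).1) fun _ _ => le_rfl
  rw [limsup_eq_iInf_iSup_of_nat]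
  simp only [Set.iInf_eq_iInter, Set.iSup_eq_iUnion]
  rw [Antitone.measure_iInter]
  · exact le_iInf htail
  · exact fun N M h => Set.biUnion_mono (fun k hk => h.trans hk) fun _ _ => le_rfl
  · exact fun N => (MeasurableSet.biUnion (Set.to_countable _) fun k _ => hD k).nullMeasurableSet
  · exact ⟨0, measure_ne_top μ _⟩

end QuasiIndependent

lemma toReal_measure_lt_eq_one_sub {Ω : Type*} [MeasurableSpace Ω] {μ : Measure Ω}
    [IsProbabilityMeasure μ] {X : Ω → ℕ} (hX : Measurable X) (c : ℕ) :
    (μ {ω | X ω < c}).toReal = 1 - (μ {ω | c ≤ X ω}).toReal := by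
  have : {ω | X ω < c} = {ω | c ≤ X ω}ᶜ := by ext; simp
  rw [this, prob_compl_eq_one_sub (measurableSet_le measurable_const hX),
    ENNReal.toReal_sub_of_le prob_le_one ENNReal.one_ne_top, ENNReal.toReal_one]

section Sampling

variable {Ω β : Type*} [MeasurableSpace Ω] [MeasurableSpace β] {μ : Measure Ω}

lemma measure_setOf_forall_lt_mem_eq_prod (ξ : ℕ → Ω → β) (hindep : iIndepFun ξ μ)
    (hident : ∀ i, IdentDistrib (ξ i) (ξ 0) μ μ) {T : ℕ → Set β}
    (hT : ∀ i, MeasurableSet (T i)) (n : ℕ) :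
    μ {ω | ∀ i < n, ξ i ω ∈ T i} = ∏ i ∈ Finset.range n, μ (ξ 0 ⁻¹' T i) := by
  have : {ω | ∀ i < n, ξ i ω ∈ T i} = ⋂ i ∈ Finset.range n, ξ i ⁻¹' T i := by ext; simp
  rw [this, hindep.measure_inter_preimage_eq_mul _ fun i _ => hT i]
  exact Finset.prod_congr rfl fun i _ => (hident i).measure_mem_eq (hT i)

lemma measure_setOf_forall_lt_mem_eq_pow (ξ : ℕ → Ω → β) (hindep : iIndepFun ξ μ)
    (hident : ∀ i, IdentDistrib (ξ i) (ξ 0) μ μ) {S : Set β} (hS : MeasurableSet S) (n : ℕ) :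
    μ {ω | ∀ i < n, ξ i ω ∈ S} = μ (ξ 0 ⁻¹' S) ^ n := by
  rw [measure_setOf_forall_lt_mem_eq_prod ξ hindep hident (fun _ => hS), Finset.prod_const,
    Finset.card_range]

lemma measure_setOf_forall_lt_mem_inter_eq (ξ : ℕ → Ω → β) (hindep : iIndepFun ξ μ)
    (hident : ∀ i, IdentDistrib (ξ i) (ξ 0) μ μ) {S S' : Set β} (hS : MeasurableSet S)
    (hS' : MeasurableSet S') (hSS' : S ⊆ S') {n n' : ℕ} (hnn' : n ≤ n') :
    μ ({ω | ∀ i < n, ξ i ω ∈ S} ∩ {ω | ∀ i < n', ξ i ω ∈ S'}) =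
      μ (ξ 0 ⁻¹' S) ^ n * μ (ξ 0 ⁻¹' S') ^ (n' - n) := by
  have hset : {ω | ∀ i < n, ξ i ω ∈ S} ∩ {ω | ∀ i < n', ξ i ω ∈ S'} =
      {ω | ∀ i < n', ξ i ω ∈ if i < n then S else S'} := by
    ext ω
    simp only [Set.mem_inter_iff, Set.mem_ofPred_eq]
    constructor
    · rintro ⟨h, h'⟩ i hi
      split_ifs with hin
      exacts [h i hin, h' i hi]
    · intro h
      refine ⟨fun i hi => ?_, fun i hi => ?_⟩
      · simpa [hi] using h i (hi.trans_le hnn')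
      · have := h i hi
        split_ifs at this
        exacts [hSS' this, this]
  have hfirst : ∀ i ∈ Finset.range n,
      μ (ξ 0 ⁻¹' if i < n then S else S') = μ (ξ 0 ⁻¹' S) := fun i hi => by
    rw [if_pos (Finset.mem_range.1 hi)]
  have hlast : ∀ i ∈ Finset.Ico n n',
      μ (ξ 0 ⁻¹' if i < n then S else S') = μ (ξ 0 ⁻¹' S') := fun i hi => by
    rw [if_neg (Finset.mem_Ico.1 hi).1.not_gt]
  rw [hset,
    measure_setOf_forall_lt_mem_eq_prod ξ hindep hident fun i => by split_ifs <;> assumption,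
    ← Finset.prod_range_mul_prod_Ico _ hnn', Finset.prod_congr rfl hfirst,
    Finset.prod_congr rfl hlast, Finset.prod_const, Finset.prod_const, Finset.card_range,
    Nat.card_Ico]

theorem measure_limsup_setOf_forall_lt_mem_eq_zero_or_one {ξ : ℕ → Ω → β}
    (hmeas : ∀ i, Measurable (ξ i)) (hindep : iIndepFun ξ μ) (M : ℕ → ℕ) {T : ℕ → Set β}
    (hT : ∀ n, MeasurableSet (T n)) (hev : ∀ x, ∀ᶠ n in atTop, x ∈ T n) :
    μ (limsup (fun n => {ω | ∀ i < M n, ξ i ω ∈ T n}) atTop) = 0 ∨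
      μ (limsup (fun n => {ω | ∀ i < M n, ξ i ω ∈ T n}) atTop) = 1 := by
  refine measure_zero_or_one_of_measurableSet_limsup_atTop (fun i => (hmeas i).comap_le)
    hindep ?_
  rw [limsup_eq_iInf_iSup_of_nat, MeasurableSpace.measurableSet_iInf]
  intro N
  -- the first `N` observations are eventually in `T n`, so they do not affect the event
  have htail : limsup (fun n => {ω | ∀ i < M n, ξ i ω ∈ T n}) atTop =
      limsup (fun n => ⋂ i ∈ Finset.Ico N (M n), ξ i ⁻¹' T n) atTop := by
    ext ω
    simp only [mem_limsup_iff_frequently_mem, Set.mem_iInter, Set.mem_preimage,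
      Finset.mem_Ico, Set.mem_ofPred_eq]
    have hfirst : ∀ᶠ n in atTop, ∀ i ∈ Finset.range N, ξ i ω ∈ T n :=
      (Finset.eventually_all _).2 fun i _ => hev (ξ i ω)
    constructor
    · exact fun h => h.mono fun n hn i hi => hn i hi.2
    · refine fun h => (h.and_eventually hfirst).mono fun n hn i hi => ?_
      by_cases hiN : N ≤ i
      exacts [hn.1 i ⟨hiN, hi⟩, hn.2 i (Finset.mem_range.2 (not_le.1 hiN))]
  rw [htail]
  refine @MeasurableSet.measurableSet_limsup Ω (⨆ i ≥ N, MeasurableSpace.comap (ξ i) inferInstance)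
    _ fun n => .biInter (Set.to_countable _) fun i hi => ?_
  exact le_iSup₂ (f := fun j (_ : j ≥ N) => MeasurableSpace.comap (ξ j) inferInstance) i
    (Finset.mem_Ico.1 hi).1 _ ⟨T n, hT n, rfl⟩

end Sampling

lemma limsup_subset_limsup_of_subset_comp {α : Type*} {u v : ℕ → Set α} {f : ℕ → ℕ}
    (hf : Tendsto f atTop atTop) (h : ∀ᶠ n in atTop, u n ⊆ v (f n)) :
    limsup u atTop ⊆ limsup v atTop := by
  intro ω hω
  rw [mem_limsup_iff_frequently_mem] at hω ⊢
  exact hf.frequently ((hω.and_eventually h).mono fun n hn => hn.2 hn.1)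

-- `{ξ̄ₙ < c}` in the notation of the paper
def firstBelow {Ω : Type*} (ξ : ℕ → Ω → ℕ) (n c : ℕ) : Set Ω := {ω | ∀ i < n, ξ i ω < c}

lemma measurableSet_firstBelow {Ω : Type*} [MeasurableSpace Ω] {ξ : ℕ → Ω → ℕ}
    (hmeas : ∀ i, Measurable (ξ i)) (n c : ℕ) : MeasurableSet (firstBelow ξ n c) := by
  simp only [firstBelow, Set.ofPred_forall]
  exact .iInter fun i => .iInter fun _ => hmeas i measurableSet_Iio

lemma setOf_sup_le_sub_eq_firstBelow {Ω : Type*} (ξ : ℕ → Ω → ℕ) {n : ℕ} (hn : 0 < n)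
    (t l : ℕ) :
    {ω | (((Finset.range n).sup fun i => ξ i ω : ℕ) : ℤ) ≤ (t : ℤ) - l} =
      firstBelow ξ n (t + 1 - l) := by
  ext ω
  simp only [firstBelow, Set.mem_ofPred_eq]
  constructor
  · intro h i hi
    have := Finset.le_sup (f := fun j => ξ j ω) (Finset.mem_range.2 hi)
    omega
  · intro h
    have := (Finset.sup_lt_iff ((Nat.zero_le _).trans_lt (h 0 hn))).2 fun i hi =>
      h i (Finset.mem_range.1 hi)
    omega

lemma limsup_firstBelow_eq {Ω : Type*} (ξ : ℕ → Ω → ℕ) {b M : ℕ → ℕ}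
    (hbM : ∀ c n, 0 < c → 0 < n → (c ≤ b n ↔ M c ≤ n)) :
    limsup (fun n => firstBelow ξ n (b n)) atTop =
      limsup (fun c => firstBelow ξ (M c) c) atTop := by
  have hb : Tendsto b atTop atTop := by
    refine tendsto_atTop.2 fun c => eventually_atTop.2 ⟨max 1 (M (c + 1)), fun n hn => ?_⟩
    have := (hbM (c + 1) n c.succ_pos (by omega)).2 (by omega)
    omega
  have hM : Tendsto M atTop atTop := by
    refine tendsto_atTop.2 fun n => eventually_atTop.2 ⟨b (n + 1) + 1, fun c hc => ?_⟩
    by_contra! h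
    have := (hbM c (n + 1) (by omega) n.succ_pos).2 (by omega)
    omega
  apply Set.Subset.antisymm
  · refine limsup_subset_limsup_of_subset_comp hb
      (eventually_atTop.2 ⟨1, fun n hn ω hω i hi => ?_⟩)
    have hbn : 0 < b n := (Nat.zero_le _).trans_lt (hω 0 hn)
    exact hω i (hi.trans_le ((hbM (b n) n hbn hn).1 le_rfl))
  · refine limsup_subset_limsup_of_subset_comp hM (Eventually.of_forall fun c ω hω i hi => ?_)
    have hc : 0 < c := (Nat.zero_le _).trans_lt (hω i hi)
    exact (hω i hi).trans_le ((hbM c (M c) hc (by omega)).2 le_rfl)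

lemma le_iff_ceil_inv_le_of_isGreatest {g : ℕ → ℝ} (hg : Antitone g) (hpos : ∀ k, 0 < g k)
    {n a : ℕ} (hn : 0 < n) (ha : IsGreatest {k : ℕ | 1 / (n : ℝ) ≤ g k} a) (k : ℕ) :
    k ≤ a ↔ ⌈(g k)⁻¹⌉₊ ≤ n := by
  rw [Nat.ceil_le, inv_le_comm₀ (hpos k) (by positivity), ← one_div]
  exact ⟨fun hk => ha.1.trans (hg hk), fun hk => ha.2 hk⟩

lemma limsup_setOf_sup_le_sub_eq_limsup_firstBelow {Ω : Type*} (ξ : ℕ → Ω → ℕ) {g : ℕ → ℝ}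
    (hg : Antitone g) (hpos : ∀ k, 0 < g k) {a : ℕ → ℕ}
    (ha : ∀ n : ℕ, 1 ≤ n → IsGreatest {k : ℕ | 1 / (n : ℝ) ≤ g k} (a n)) (d : ℕ) :
    limsup (fun n =>
        {ω | (((Finset.range n).sup fun i => ξ i ω : ℕ) : ℤ) ≤ (a n : ℤ) - (d + 1 : ℕ)}) atTop =
      limsup (fun c => firstBelow ξ ⌈(g (c + d))⁻¹⌉₊ c) atTop := by
  rw [← limsup_firstBelow_eq ξ (b := fun n => a n + 1 - (d + 1)) fun c n hc hn => ?_]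
  · exact limsup_congr (eventually_atTop.2
      ⟨1, fun n hn => setOf_sup_le_sub_eq_firstBelow ξ hn _ _⟩)
  · rw [← le_iff_ceil_inv_le_of_isGreatest hg hpos hn (ha n hn)]
    omega

section Blocks

variable {Ω : Type*} [MeasurableSpace Ω] {μ : Measure Ω} {ξ : ℕ → Ω → ℕ} {R r : ℕ → ℝ}

lemma measure_firstBelow_toReal (hindep : iIndepFun ξ μ)
    (hident : ∀ i, IdentDistrib (ξ i) (ξ 0) μ μ)
    (hp : ∀ c, (μ {ω | ξ 0 ω < c}).toReal = 1 - Real.exp (-R c)) (n c : ℕ) :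
    (μ (firstBelow ξ n c)).toReal = (1 - Real.exp (-R c)) ^ n := by
  rw [← hp, ← ENNReal.toReal_pow]
  congr 1
  exact measure_setOf_forall_lt_mem_eq_pow ξ hindep hident measurableSet_Iio n

lemma exp_neg_le_measure_firstBelow_toReal (hindep : iIndepFun ξ μ)
    (hident : ∀ i, IdentDistrib (ξ i) (ξ 0) μ μ)
    (hp : ∀ c, (μ {ω | ξ 0 ω < c}).toReal = 1 - Real.exp (-R c))
    (hRr : ∀ n, R (n + 1) = R n + r (n + 1)) (hr : Monotone r) {c d : ℕ}
    (hsmall : (Real.exp (d * r (c + d)) + 2) * Real.exp (-R c) ≤ 1) :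
    Real.exp (-(Real.exp (d * r (c + d)) + 2)) ≤
      (μ (firstBelow ξ ⌈Real.exp (R (c + d))⌉₊ c)).toReal := by
  rw [measure_firstBelow_toReal hindep hident hp]
  refine exp_neg_le_one_sub_exp_neg_pow_ceil (Real.exp_pos _).le ?_ hsmall
  exact Real.exp_le_exp.2 (sub_le_mul_of_monotone_increments hRr hr c d)

lemma measure_firstBelow_inter_le [IsFiniteMeasure μ] (hindep : iIndepFun ξ μ)
    (hident : ∀ i, IdentDistrib (ξ i) (ξ 0) μ μ)
    (hp : ∀ c, (μ {ω | ξ 0 ω < c}).toReal = 1 - Real.exp (-R c)) (hR : Monotone R)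
    {c c' d : ℕ} (hcc' : c + d ≤ c') (hsmall : 3 * Real.exp (-R c') ≤ 1) :
    μ (firstBelow ξ ⌈Real.exp (R (c + d))⌉₊ c ∩ firstBelow ξ ⌈Real.exp (R (c' + d))⌉₊ c') ≤
      ENNReal.ofReal (Real.exp 3) * μ (firstBelow ξ ⌈Real.exp (R (c + d))⌉₊ c) *
        μ (firstBelow ξ ⌈Real.exp (R (c' + d))⌉₊ c') := by
  set n := ⌈Real.exp (R (c + d))⌉₊
  set n' := ⌈Real.exp (R (c' + d))⌉₊
  have hnn' : n ≤ n' := Nat.ceil_mono (Real.exp_le_exp.2 (hR (by omega)))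
  have hinter : (μ (firstBelow ξ n c ∩ firstBelow ξ n' c')).toReal =
      (1 - Real.exp (-R c)) ^ n * (1 - Real.exp (-R c')) ^ (n' - n) := by
    rw [← hp, ← hp, ← ENNReal.toReal_pow, ← ENNReal.toReal_pow, ← ENNReal.toReal_mul]
    congr 1
    exact measure_setOf_forall_lt_mem_inter_eq ξ hindep hident measurableSet_Iio measurableSet_Iio
      (Set.Iio_subset_Iio (by omega)) hnn'
  -- the constraint on the first `n` observations in the second event has probability `≥ e⁻³`
  have hfactor : 1 ≤ Real.exp 3 * (1 - Real.exp (-R c')) ^ n := by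
    have h := exp_neg_le_one_sub_exp_neg_pow_ceil (a := R (c + d)) (b := R c') zero_le_one
      (Real.exp_le_one_iff.2 (sub_nonpos.2 (hR hcc'))) (by linarith)
    rwa [show -((1 : ℝ) + 2) = -3 by norm_num, Real.exp_neg,
      inv_le_iff_one_le_mul₀' (Real.exp_pos 3)] at h
  have hu : 0 ≤ (1 - Real.exp (-R c)) ^ n := pow_nonneg (by rw [← hp]; positivity) n
  have hv : 0 ≤ (1 - Real.exp (-R c')) ^ (n' - n) := pow_nonneg (by rw [← hp]; positivity) _
  rw [← ENNReal.toReal_le_toReal (by finiteness) (by finiteness), hinter, ENNReal.toReal_mul,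
    ENNReal.toReal_mul, ENNReal.toReal_ofReal (Real.exp_pos 3).le,
    measure_firstBelow_toReal hindep hident hp, measure_firstBelow_toReal hindep hident hp,
    ← Nat.sub_add_cancel hnn', pow_add, Nat.sub_add_cancel hnn']
  nlinarith [mul_le_mul_of_nonneg_left hfactor (mul_nonneg hu hv)]

theorem measure_limsup_firstBelow_eq_zero [IsFiniteMeasure μ] (hindep : iIndepFun ξ μ)
    (hident : ∀ i, IdentDistrib (ξ i) (ξ 0) μ μ)
    (hp : ∀ c, (μ {ω | ξ 0 ω < c}).toReal = 1 - Real.exp (-R c))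
    (hRr : ∀ n, R (n + 1) = R n + r (n + 1)) (hr : Monotone r) (d : ℕ)
    (hsum : Summable fun k : ℕ => Real.exp (-Real.exp (d * r (k + 1)))) :
    μ (limsup (fun c => firstBelow ξ ⌈Real.exp (R (c + d))⌉₊ c) atTop) = 0 := by
  refine measure_limsup_atTop_eq_zero (ne_top_of_le_ne_top hsum.tsum_ofReal_ne_top
    (ENNReal.tsum_le_tsum fun c => ?_))
  have hRc : Real.exp (-R c) ≤ 1 := by linarith [hp c ▸ ENNReal.toReal_nonneg]
  rw [← ENNReal.ofReal_toReal (measure_ne_top μ _), measure_firstBelow_toReal hindep hident hp]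
  exact ENNReal.ofReal_le_ofReal (one_sub_exp_neg_pow_ceil_le hRr hr hRc d)

theorem measure_limsup_firstBelow_ne_zero [IsFiniteMeasure μ] (hmeas : ∀ i, Measurable (ξ i))
    (hindep : iIndepFun ξ μ) (hident : ∀ i, IdentDistrib (ξ i) (ξ 0) μ μ)
    (hp : ∀ c, (μ {ω | ξ 0 ω < c}).toReal = 1 - Real.exp (-R c)) (hR : Monotone R)
    (hRr : ∀ n, R (n + 1) = R n + r (n + 1)) (hr : Monotone r)
    (hrinf : Tendsto r atTop atTop) {d : ℕ} (hd : 0 < d)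
    (hdiv : ¬Summable fun k : ℕ => Real.exp (-Real.exp (d * r (k + 1)))) :
    μ (limsup (fun c => firstBelow ξ ⌈Real.exp (R (c + d))⌉₊ c) atTop) ≠ 0 := by
  set D := fun c => firstBelow ξ ⌈Real.exp (R (c + d))⌉₊ c
  set X := fun c : ℕ => Real.exp (d * r (c + d))
  obtain ⟨N, hN⟩ := eventually_atTop.1 (eventually_add_mul_exp_neg_le_one hRr hr hrinf 3)
  -- keep only the indices where `X c ≤ c`: the others contribute a summable part
  set G := {c : ℕ | N ≤ c ∧ X c ≤ c}
  classical
  set D' := fun c => if c ∈ G then D c else ∅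
  have hD' : ∀ c, MeasurableSet (D' c) := fun c => by
    dsimp only [D']
    split_ifs
    exacts [measurableSet_firstBelow hmeas _ _, .empty]
  have hsum : ∑' c, μ (D' c) = ∞ := by
    refine ENNReal.tsum_eq_top_of_not_summable_le
      (u := fun c => Real.exp (-2) * G.indicator (fun c => Real.exp (-X c)) c) ?_
      (fun c => mul_nonneg (Real.exp_pos _).le
        (G.indicator_nonneg (fun c _ => (Real.exp_pos _).le) c))
      fun c => ?_
    · rw [summable_mul_left_iff (Real.exp_pos _).ne']
      refine not_summable_indicator_exp_neg N fun hX => hdiv ((summable_nat_add_iff (d - 1)).1 ?_)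
      simpa [show ∀ k, k + (d - 1) + 1 = k + d by omega] using hX
    by_cases hc : c ∈ G
    · rw [Set.indicator_of_mem hc, ← Real.exp_add, show -2 + -X c = -(X c + 2) by ring]
      simp only [D', if_pos hc]
      exact exp_neg_le_measure_firstBelow_toReal hindep hident hp hRr hr
        (by nlinarith [hN c hc.1, hc.2, Real.exp_pos (-R c)])
    · simp [D', hc]
  have hpair : ∀ c c', c + d ≤ c' →
      μ (D' c ∩ D' c') ≤ ENNReal.ofReal (Real.exp 3) * μ (D' c) * μ (D' c') := by
    intro c c' hcc'
    by_cases hc : c ∈ G <;> by_cases hc' : c' ∈ G <;> simp only [D', hc, hc', if_true,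
      if_false, Set.inter_empty, Set.empty_inter, measure_empty, zero_le]
    exact measure_firstBelow_inter_le hindep hident hp hR hcc'
      (by nlinarith [hN c' hc'.1, Real.exp_pos (-R c'), (Nat.cast_nonneg c' : (0 : ℝ) ≤ c')])
  have hD'D : limsup D' atTop ⊆ limsup D atTop :=
    limsup_subset_limsup_of_subset_comp tendsto_id (Eventually.of_forall fun c => by
      dsimp only [D', id]
      split_ifs
      exacts [le_rfl, Set.empty_subset _])
  exact ne_bot_of_gt ((ENNReal.inv_pos.2 (by finiteness)).trans_le
    ((inv_add_one_le_measure_limsup hD' hpair hsum).trans (measure_mono hD'D)))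

end Blocks

/-- Theorem 2(ii): for fixed `l > 1`, `P(ξ̄ₙ ≤ aₙ - l  i.o.)` is 0 or 1 according
as `∑_{k≥1} exp(-exp((l-1) r(k)))` converges or diverges. -/
theorem max_le_a_sub_l_io_zero_one {Ω : Type*} [MeasureSpace Ω]
    [IsProbabilityMeasure (ℙ : Measure Ω)] (ξ : ℕ → Ω → ℕ)
    (hmeas : ∀ i, Measurable (ξ i))
    (hindep : iIndepFun ξ ℙ)
    (hident : ∀ i, IdentDistrib (ξ i) (ξ 0) ℙ ℙ)
    (hpos : ∀ k : ℕ, 0 < ℙ {ω | ξ 0 ω = k})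
    (R r : ℕ → ℝ)
    (hR : ∀ n, R n = -Real.log (ℙ {ω | n ≤ ξ 0 ω}).toReal)
    (hr : ∀ n : ℕ, 1 ≤ n → r n = R n - R (n - 1))
    (hrmono : Monotone r)
    (hrinf : Tendsto r atTop atTop)
    (a : ℕ → ℕ)
    (ha : ∀ n : ℕ, 1 ≤ n →
      IsGreatest {k : ℕ | 1 / (n : ℝ) ≤ (ℙ {ω | k ≤ ξ 0 ω}).toReal} (a n))
    (l : ℕ) (hl : 1 < l) :
    (Summable (fun k : ℕ => Real.exp (-Real.exp (((l : ℝ) - 1) * r (k + 1)))) →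
      ℙ (limsup (fun n =>
          {ω | (((Finset.range n).sup fun i => ξ i ω : ℕ) : ℤ) ≤ (a n : ℤ) - l})
        atTop) = 0) ∧
    (¬ Summable (fun k : ℕ => Real.exp (-Real.exp (((l : ℝ) - 1) * r (k + 1)))) →
      ℙ (limsup (fun n =>
          {ω | (((Finset.range n).sup fun i => ξ i ω : ℕ) : ℤ) ≤ (a n : ℤ) - l})
        atTop) = 1) := by
  obtain ⟨d, rfl⟩ : ∃ d, l = d + 1 := ⟨l - 1, by omega⟩
  have hgpos : ∀ k, 0 < (ℙ {ω | k ≤ ξ 0 ω}).toReal := fun k =>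
    ENNReal.toReal_pos ((hpos k).trans_le (measure_mono fun ω (h : ξ 0 ω = k) => h.ge)).ne'
      (measure_ne_top _ _)
  have hganti : Antitone fun k => (ℙ {ω | k ≤ ξ 0 ω}).toReal := fun j k hjk =>
    ENNReal.toReal_mono (measure_ne_top _ _) (measure_mono fun ω (h : k ≤ ξ 0 ω) => hjk.trans h)
  have hg : ∀ k, (ℙ {ω | k ≤ ξ 0 ω}).toReal = Real.exp (-R k) := fun k => by
    rw [hR, neg_neg, Real.exp_log (hgpos k)]
  have hRmono : Monotone R := fun j k hjk => by
    simpa only [hR, neg_le_neg_iff] using Real.log_le_log (hgpos k) (hganti hjk)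
  have hRr : ∀ n, R (n + 1) = R n + r (n + 1) := fun n => by
    rw [hr (n + 1) n.succ_pos, Nat.add_sub_cancel]
    ring
  have hp : ∀ c, (ℙ {ω | ξ 0 ω < c}).toReal = 1 - Real.exp (-R c) := fun c => by
    rw [toReal_measure_lt_eq_one_sub (hmeas 0), hg]
  have hlimsup := limsup_setOf_sup_le_sub_eq_limsup_firstBelow ξ hganti hgpos ha d
  simp only [hg, ← Real.exp_neg, neg_neg] at hlimsup
  have h01 := measure_limsup_setOf_forall_lt_mem_eq_zero_or_one hmeas hindep
    (fun c => ⌈Real.exp (R (c + d))⌉₊) (fun _ => measurableSet_Iio) fun x => eventually_gt_atTop x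
  rw [hlimsup, show ((d + 1 : ℕ) : ℝ) - 1 = d by push_cast; ring]
  exact ⟨measure_limsup_firstBelow_eq_zero hindep hident hp hRr hrmono d, fun hdiv =>
    h01.resolve_left (measure_limsup_firstBelow_ne_zero hmeas hindep hident hp hRmono hRr hrmono
      hrinf (by omega) hdiv)⟩
end
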